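/- Let s > 0, 1 ≤ p < ∞, 1/τ = 1/p + s/d, 1/q = 1 + s/d, and let (f_I)_{I∈D} be nonnegative-coefficient data with maximal function M(x) = (Σ_{I∈D}|I|^{-sq/d}|f_I|^q χ_I(x))^{1/q} satisfying ‖M‖_{L^τ} < ∞. With z_I(x) = |f_I|^q|I|^{-qs/d}χ_I(x) and Z_I(x) = Σ_{I⊆I'} z_{I'}(x), for every ε > 0 there is C_ε such that pointwise Σ_{I∈D} z_I(x) Z_I(x)^{ε-1} ≤ C_ε M(x)^{qε}, and consequently ‖x ↦ Σ_{I∈D} z_I(x)Z_I(x)^{(τ/(pq))-1}‖_{L^p} ≤ C ‖M‖_{L^τ}^{τ/p}, with C depending only on p, s, d. -/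

import Mathlib

/-!
Fix `x`. For `0 < ε ≤ 1`, concavity of `t ↦ t ^ ε` gives `ε g (g + B) ^ (ε - 1) + B ^ ε ≤ (g + B) ^ ε`,
so for a sequence `g_j ≥ 0` with tails `G_j = g_j + G_{j+1} ≤ T` the sum `∑ g_j G_j ^ (ε - 1)`
telescopes to at most `T ^ ε / ε`. The cubes are closed, so `x` may lie in `2 ^ d` cubes of one
generation; but cubes containing `x` on the same side of each of their right faces are nested.
Grouping the `z_I` by this side pattern and then by generation therefore produces `2 ^ d` such
sequences, whose tail at `I` is at most `Z_I`. For `ε ≥ 1` it suffices that `Z_I ≤ M ^ q`.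
The `L^p` bound is the pointwise one for `ε = τ / (p q)`, raised to the power `p` and integrated.
-/

open MeasureTheory
open scoped ENNReal

def dyadicCube (d : ℕ) (j : ℤ) (m : Fin d → ℤ) : Set (EuclideanSpace ℝ (Fin d)) :=
  {x | ∀ i, (2:ℝ) ^ j * (m i : ℝ) ≤ x i ∧ x i ≤ (2:ℝ) ^ j * ((m i : ℝ) + 1)}

noncomputable def dyadicVol (d : ℕ) (I : ℤ × (Fin d → ℤ)) : ℝ≥0∞ :=
  (2 : ℝ≥0∞) ^ (I.1 * (d : ℤ))

/-- The basic summand `z_I(x) = |f_I|^q |I|^{-qs/d} χ_I(x)`. -/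
noncomputable def zFn (d : ℕ) (s q : ℝ) (f : ℤ × (Fin d → ℤ) → ℝ)
    (I : ℤ × (Fin d → ℤ)) (x : EuclideanSpace ℝ (Fin d)) : ℝ≥0∞ :=
  (dyadicVol d I) ^ (-(q * s) / d) * ENNReal.ofReal |f I| ^ q *
    (dyadicCube d I.1 I.2).indicator (fun _ => (1 : ℝ≥0∞)) x

/-- The partial sum `Z_I(x) = Σ_{I⊆I'} z_{I'}(x)` over dyadic ancestors. -/
noncomputable def zPartial (d : ℕ) (s q : ℝ) (f : ℤ × (Fin d → ℤ) → ℝ)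
    (I : ℤ × (Fin d → ℤ)) (x : EuclideanSpace ℝ (Fin d)) : ℝ≥0∞ :=
  ∑' I' : {p : ℤ × (Fin d → ℤ) // dyadicCube d I.1 I.2 ⊆ dyadicCube d p.1 p.2},
    zFn d s q f (I' : ℤ × (Fin d → ℤ)) x

/-- The maximal function `M(x) = (Σ_I z_I(x))^{1/q}`. -/
noncomputable def sqMaxFn (d : ℕ) (s q : ℝ) (f : ℤ × (Fin d → ℤ) → ℝ)
    (x : EuclideanSpace ℝ (Fin d)) : ℝ≥0∞ :=
  (∑' I : ℤ × (Fin d → ℤ), zFn d s q f I x) ^ (1 / q)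

theorem ENNReal.rpow_le_rpow_of_nonpos {x y : ℝ≥0∞} {z : ℝ} (hxy : x ≤ y) (hz : z ≤ 0) :
    y ^ z ≤ x ^ z := by
  have h := ENNReal.inv_le_inv.mpr (ENNReal.rpow_le_rpow hxy (neg_nonneg.mpr hz))
  rwa [← ENNReal.rpow_neg, ← ENNReal.rpow_neg, neg_neg] at h

theorem Real.mul_mul_rpow_sub_one_add_rpow_le {ε a b : ℝ} (hε₀ : 0 ≤ ε) (hε₁ : ε ≤ 1)
    (hb : 0 ≤ b) (hab : 0 < a + b) :
    ε * (a * (a + b) ^ (ε - 1)) + b ^ ε ≤ (a + b) ^ ε := by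
  set A := a + b
  have hbern : (b / A) ^ ε ≤ 1 + ε * (b / A - 1) := by
    simpa using rpow_one_add_le_one_add_mul_self (s := b / A - 1)
      (by linarith [div_nonneg hb hab.le]) hε₀ hε₁
  have hAε : 0 < A ^ ε := Real.rpow_pos_of_pos hab ε
  have hb_eq : b ^ ε = (b / A) ^ ε * A ^ ε := by
    rw [Real.div_rpow hb hab.le, div_mul_cancel₀ _ hAε.ne']
  have ha_eq : a * A ^ (ε - 1) = (1 - b / A) * A ^ ε := by
    rw [Real.rpow_sub_one hab.ne']
    field_simp
    ring
  calc ε * (a * A ^ (ε - 1)) + b ^ ε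
      = ε * ((1 - b / A) * A ^ ε) + (b / A) ^ ε * A ^ ε := by rw [hb_eq, ha_eq]
    _ ≤ ε * ((1 - b / A) * A ^ ε) + (1 + ε * (b / A - 1)) * A ^ ε := by gcongr
    _ = A ^ ε := by ring

theorem ENNReal.ofReal_mul_mul_rpow_sub_one_add_rpow_le {ε : ℝ} (hε₀ : 0 < ε) (hε₁ : ε ≤ 1)
    {a b : ℝ≥0∞} (ha : a ≠ ∞) (hb : b ≠ ∞) :
    ENNReal.ofReal ε * (a * (a + b) ^ (ε - 1)) + b ^ ε ≤ (a + b) ^ ε := by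
  rcases eq_or_ne (a + b) 0 with hab | hab
  · obtain ⟨rfl, rfl⟩ := add_eq_zero.mp hab
    simp [ENNReal.zero_rpow_of_pos hε₀]
  have hpos : 0 < a.toReal + b.toReal := by
    rw [← ENNReal.toReal_add ha hb]
    exact ENNReal.toReal_pos hab (ENNReal.add_ne_top.mpr ⟨ha, hb⟩)
  rw [← ENNReal.ofReal_toReal ha, ← ENNReal.ofReal_toReal hb]
  rw [← ENNReal.ofReal_add ENNReal.toReal_nonneg ENNReal.toReal_nonneg,
    ENNReal.ofReal_rpow_of_pos hpos, ENNReal.ofReal_rpow_of_pos hpos,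
    ENNReal.ofReal_rpow_of_nonneg ENNReal.toReal_nonneg hε₀.le,
    ← ENNReal.ofReal_mul ENNReal.toReal_nonneg, ← ENNReal.ofReal_mul hε₀.le,
    ← ENNReal.ofReal_add (by positivity) (by positivity)]
  exact ENNReal.ofReal_le_ofReal (Real.mul_mul_rpow_sub_one_add_rpow_le hε₀.le hε₁
    ENNReal.toReal_nonneg hpos)

theorem ENNReal.ofReal_mul_tsum_int_mul_rpow_sub_one_le {ε : ℝ} (hε₀ : 0 < ε) (hε₁ : ε ≤ 1)
    {g G : ℤ → ℝ≥0∞} {T : ℝ≥0∞} (hT : T ≠ ∞) (hG : ∀ j, G j = g j + G (j + 1))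
    (hGT : ∀ j, G j ≤ T) :
    ENNReal.ofReal ε * ∑' j, g j * G j ^ (ε - 1) ≤ T ^ ε := by
  have hG_ne_top j : G j ≠ ∞ := ne_top_of_le_ne_top hT (hGT j)
  have telescope (a b : ℤ) (hab : a ≤ b) :
      ENNReal.ofReal ε * ∑ j ∈ Finset.Ico a b, g j * G j ^ (ε - 1) + G b ^ ε ≤ G a ^ ε := by
    induction b, hab using Int.leInduction with
    | base => simp
    | succ b hab ih =>
      have hg : g b ≠ ∞ := ne_top_of_le_ne_top (hG_ne_top b) (hG b ▸ le_self_add)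
      calc ENNReal.ofReal ε * ∑ j ∈ Finset.Ico a (b + 1), g j * G j ^ (ε - 1) + G (b + 1) ^ ε
          = ENNReal.ofReal ε * ∑ j ∈ Finset.Ico a b, g j * G j ^ (ε - 1)
              + (ENNReal.ofReal ε * (g b * G b ^ (ε - 1)) + G (b + 1) ^ ε) := by
            rw [Finset.Ico_add_one_right_eq_Icc, ← Finset.Ico_insert_right hab,
              Finset.sum_insert Finset.right_notMem_Ico]
            ring
        _ ≤ ENNReal.ofReal ε * ∑ j ∈ Finset.Ico a b, g j * G j ^ (ε - 1) + G b ^ ε := by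
            grw [hG b, ENNReal.ofReal_mul_mul_rpow_sub_one_add_rpow_le hε₀ hε₁ hg
              (hG_ne_top (b + 1))]
        _ ≤ G a ^ ε := ih
  rw [← ENNReal.tsum_mul_left]
  refine ENNReal.summable.tsum_le_of_sum_le fun t => ?_
  obtain ⟨a, ha⟩ := t.bddBelow
  obtain ⟨b, hb⟩ := t.bddAbove
  have ht : t ⊆ Finset.Ico a (max a (b + 1)) := fun j hj =>
    Finset.mem_Ico.mpr ⟨ha hj, lt_max_of_lt_right (Int.lt_add_one_of_le (hb hj))⟩
  calc ∑ j ∈ t, ENNReal.ofReal ε * (g j * G j ^ (ε - 1))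
      ≤ ENNReal.ofReal ε * ∑ j ∈ Finset.Ico a (max a (b + 1)), g j * G j ^ (ε - 1) := by
        rw [Finset.mul_sum]
        exact Finset.sum_le_sum_of_subset ht
    _ ≤ G a ^ ε := le_of_add_le_left (telescope a _ (le_max_left _ _))
    _ ≤ T ^ ε := ENNReal.rpow_le_rpow (hGT a) hε₀.le

theorem ENNReal.ofReal_mul_tsum_mul_rpow_sub_one_le {ι : Type*} {ε : ℝ} (hε₀ : 0 < ε)
    (hε₁ : ε ≤ 1) (z Z : ι → ℝ≥0∞) (n : ι → ℤ)
    (hZ : ∀ i, z i ≠ 0 → ∑' k, {k | n i ≤ n k}.indicator z k ≤ Z i) :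
    ENNReal.ofReal ε * ∑' i, z i * Z i ^ (ε - 1) ≤ (∑' i, z i) ^ ε := by
  rcases eq_or_ne (∑' i, z i) ∞ with hT | hT
  · simp [hT, ENNReal.top_rpow_of_pos hε₀]
  set g : ℤ → ℝ≥0∞ := fun j => ∑' i : n ⁻¹' {j}, z i
  set G : ℤ → ℝ≥0∞ := fun j => ∑' i, {i | j ≤ n i}.indicator z i
  have hG j : G j = g j + G (j + 1) := by
    simp only [G, g]
    rw [tsum_subtype, ← ENNReal.tsum_add]
    refine tsum_congr fun i => ?_
    classical
    simp only [Set.indicator_apply, Set.mem_ofPred_eq, Set.mem_preimage, Set.mem_singleton_iff]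
    split_ifs <;> first | omega | simp
  have hGT j : G j ≤ ∑' i, z i := ENNReal.tsum_le_tsum fun i => Set.indicator_le_self _ _ i
  have hZG i : z i * Z i ^ (ε - 1) ≤ z i * G (n i) ^ (ε - 1) := by
    rcases eq_or_ne (z i) 0 with hz | hz
    · simp [hz]
    · exact mul_le_mul' le_rfl <| ENNReal.rpow_le_rpow_of_nonpos (hZ i hz) (by linarith)
  have hfiber : ∑' i, z i * G (n i) ^ (ε - 1) = ∑' j, g j * G j ^ (ε - 1) := by
    rw [← ENNReal.tsum_fiberwise _ n]
    refine tsum_congr fun j => ?_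
    rw [← ENNReal.tsum_mul_right]
    exact tsum_congr fun i => by rw [i.2]
  calc ENNReal.ofReal ε * ∑' i, z i * Z i ^ (ε - 1)
      ≤ ENNReal.ofReal ε * ∑' j, g j * G j ^ (ε - 1) := by
        grw [← hfiber, ENNReal.tsum_le_tsum hZG]
    _ ≤ (∑' i, z i) ^ ε := ENNReal.ofReal_mul_tsum_int_mul_rpow_sub_one_le hε₀ hε₁ hT hG hGT

theorem ENNReal.ofReal_mul_tsum_mul_rpow_sub_one_le_card_mul {ι κ : Type*} [Fintype κ]
    {ε : ℝ} (hε₀ : 0 < ε) (hε₁ : ε ≤ 1) (z Z : ι → ℝ≥0∞) (c : ι → κ) (n : ι → ℤ)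
    (hZ : ∀ i, z i ≠ 0 → ∑' k, {k | c k = c i ∧ n i ≤ n k}.indicator z k ≤ Z i) :
    ENNReal.ofReal ε * ∑' i, z i * Z i ^ (ε - 1) ≤ Fintype.card κ * (∑' i, z i) ^ ε := by
  have hclass (σ : κ) : ENNReal.ofReal ε * ∑' i, (c ⁻¹' {σ}).indicator z i * Z i ^ (ε - 1)
      ≤ (∑' i, z i) ^ ε := by
    refine (ENNReal.ofReal_mul_tsum_mul_rpow_sub_one_le hε₀ hε₁ _ Z n fun i hi => ?_).trans
      (ENNReal.rpow_le_rpow (ENNReal.tsum_le_tsum fun i => Set.indicator_le_self _ _ i) hε₀.le)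
    have hci : c i = σ := by
      by_contra h
      exact hi (Set.indicator_of_notMem (show i ∉ c ⁻¹' {σ} from h) z)
    rw [Set.indicator_of_mem (show i ∈ c ⁻¹' {σ} from hci)] at hi
    convert hZ i hi using 3 with k
    rw [Set.indicator_indicator]
    congr 1
    ext k
    simp [hci, and_comm]
  calc ENNReal.ofReal ε * ∑' i, z i * Z i ^ (ε - 1)
      = ∑ σ, ENNReal.ofReal ε * ∑' i, (c ⁻¹' {σ}).indicator z i * Z i ^ (ε - 1) := by
        rw [← ENNReal.tsum_fiberwise _ c, tsum_fintype, Finset.mul_sum]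
        refine Finset.sum_congr rfl fun σ _ => ?_
        rw [tsum_subtype (c ⁻¹' {σ}) fun i => z i * Z i ^ (ε - 1)]
        simp only [Set.indicator_mul_left]
    _ ≤ ∑ _σ : κ, (∑' i, z i) ^ ε := Finset.sum_le_sum fun σ _ => hclass σ
    _ = Fintype.card κ * (∑' i, z i) ^ ε := by
        rw [Finset.sum_const, Finset.card_univ, nsmul_eq_mul]

theorem ENNReal.tsum_mul_rpow_sub_one_le_rpow_tsum {ι : Type*} {ε : ℝ} (hε : 1 ≤ ε)
    (z Z : ι → ℝ≥0∞) (hZ : ∀ i, Z i ≤ ∑' k, z k) :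
    ∑' i, z i * Z i ^ (ε - 1) ≤ (∑' i, z i) ^ ε :=
  calc ∑' i, z i * Z i ^ (ε - 1)
      ≤ ∑' i, z i * (∑' k, z k) ^ (ε - 1) :=
        ENNReal.tsum_le_tsum fun i =>
          mul_le_mul' le_rfl (ENNReal.rpow_le_rpow (hZ i) (sub_nonneg.mpr hε))
    _ = (∑' i, z i) ^ ((1 : ℝ) + (ε - 1)) := by
        rw [ENNReal.rpow_add_of_nonneg _ _ zero_le_one (sub_nonneg.mpr hε), ENNReal.rpow_one,
          ENNReal.tsum_mul_right]
    _ = (∑' i, z i) ^ ε := by rw [add_sub_cancel]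

theorem dyadic_interval_nested_of_overlap {j j' m m' : ℤ} (hj : j ≤ j')
    (h₁ : (2:ℝ) ^ j' * m' < 2 ^ j * (m + 1)) (h₂ : (2:ℝ) ^ j * m < 2 ^ j' * (m' + 1)) :
    (2:ℝ) ^ j' * m' ≤ 2 ^ j * m ∧ (2:ℝ) ^ j * (m + 1) ≤ 2 ^ j' * (m' + 1) := by
  obtain ⟨k, rfl⟩ := Int.le.dest hj
  have hsplit : (2:ℝ) ^ (j + k) = 2 ^ j * ((2 ^ k : ℤ) : ℝ) := by
    rw [zpow_add₀ two_ne_zero, zpow_natCast]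
    push_cast
    rfl
  have hpos : (0:ℝ) < 2 ^ j := by positivity
  simp only [hsplit, mul_assoc] at h₁ h₂ ⊢
  rw [mul_lt_mul_iff_right₀ hpos] at h₁ h₂
  rw [mul_le_mul_iff_right₀ hpos, mul_le_mul_iff_right₀ hpos]
  have h₁' : 2 ^ k * m' < m + 1 := by exact_mod_cast h₁
  have h₂' : m < 2 ^ k * (m' + 1) := by exact_mod_cast h₂
  exact ⟨by exact_mod_cast Int.lt_add_one_iff.mp h₁', by exact_mod_cast h₂'⟩

def dyadicSide (d : ℕ) (x : EuclideanSpace ℝ (Fin d)) (I : ℤ × (Fin d → ℤ)) : Fin d → Prop :=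
  fun i => x i < (2:ℝ) ^ I.1 * ((I.2 i : ℝ) + 1)

theorem dyadicCube_subset_of_dyadicSide_eq {d : ℕ} {x : EuclideanSpace ℝ (Fin d)}
    {I I' : ℤ × (Fin d → ℤ)} (hj : I.1 ≤ I'.1) (hx : x ∈ dyadicCube d I.1 I.2)
    (hx' : x ∈ dyadicCube d I'.1 I'.2) (hside : dyadicSide d x I = dyadicSide d x I') :
    dyadicCube d I.1 I.2 ⊆ dyadicCube d I'.1 I'.2 := by
  intro y hy i
  have hiff : dyadicSide d x I i ↔ dyadicSide d x I' i := (congrFun hside i).to_iff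
  obtain ⟨hx₁, hx₂⟩ := hx i
  obtain ⟨hx₁', hx₂'⟩ := hx' i
  have hoverlap : (2:ℝ) ^ I'.1 * I'.2 i < 2 ^ I.1 * (I.2 i + 1) ∧
      (2:ℝ) ^ I.1 * I.2 i < 2 ^ I'.1 * (I'.2 i + 1) := by
    by_cases hlt : dyadicSide d x I i
    · exact ⟨hx₁'.trans_lt hlt, hx₁.trans_lt (hiff.mp hlt)⟩
    · have hb : x i = 2 ^ I.1 * (I.2 i + 1) := le_antisymm hx₂ (not_lt.mp hlt)
      have hb' : x i = 2 ^ I'.1 * (I'.2 i + 1) :=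
        le_antisymm hx₂' (not_lt.mp (hiff.not.mp hlt))
      have hI : (2:ℝ) ^ I.1 * I.2 i < 2 ^ I.1 * (I.2 i + 1) :=
        mul_lt_mul_of_pos_left (lt_add_one _) (by positivity)
      have hI' : (2:ℝ) ^ I'.1 * I'.2 i < 2 ^ I'.1 * (I'.2 i + 1) :=
        mul_lt_mul_of_pos_left (lt_add_one _) (by positivity)
      exact ⟨by linarith, by linarith⟩
  obtain ⟨hleft, hright⟩ := dyadic_interval_nested_of_overlap hj hoverlap.1 hoverlap.2
  exact ⟨hleft.trans (hy i).1, (hy i).2.trans hright⟩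

theorem mem_dyadicCube_of_zFn_ne_zero {d : ℕ} {s q : ℝ} {f : ℤ × (Fin d → ℤ) → ℝ}
    {I : ℤ × (Fin d → ℤ)} {x : EuclideanSpace ℝ (Fin d)} (h : zFn d s q f I x ≠ 0) :
    x ∈ dyadicCube d I.1 I.2 := by
  by_contra hx
  simp [zFn, Set.indicator_of_notMem hx] at h

theorem tsum_indicator_dyadicSide_zFn_le_zPartial {d : ℕ} {s q : ℝ}
    {f : ℤ × (Fin d → ℤ) → ℝ} {I : ℤ × (Fin d → ℤ)} {x : EuclideanSpace ℝ (Fin d)}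
    (hI : zFn d s q f I x ≠ 0) :
    ∑' K, {K | dyadicSide d x K = dyadicSide d x I ∧ I.1 ≤ K.1}.indicator
      (fun K => zFn d s q f K x) K ≤ zPartial d s q f I x := by
  refine le_of_le_of_eq (ENNReal.tsum_le_tsum fun K => ?_)
    (tsum_subtype {K : ℤ × (Fin d → ℤ) | dyadicCube d I.1 I.2 ⊆ dyadicCube d K.1 K.2}
      fun K => zFn d s q f K x).symm
  by_cases hK : K ∈ {K | dyadicSide d x K = dyadicSide d x I ∧ I.1 ≤ K.1}
  · rcases eq_or_ne (zFn d s q f K x) 0 with hz | hz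
    · simp [Set.indicator_apply, hz]
    rw [Set.indicator_of_mem hK, Set.indicator_of_mem]
    exact dyadicCube_subset_of_dyadicSide_eq hK.2 (mem_dyadicCube_of_zFn_ne_zero hI)
      (mem_dyadicCube_of_zFn_ne_zero hz) hK.1.symm
  · rw [Set.indicator_of_notMem hK]
    exact zero_le

theorem zPartial_le_tsum_zFn (d : ℕ) (s q : ℝ) (f : ℤ × (Fin d → ℤ) → ℝ)
    (I : ℤ × (Fin d → ℤ)) (x : EuclideanSpace ℝ (Fin d)) :
    zPartial d s q f I x ≤ ∑' K, zFn d s q f K x :=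
  ENNReal.tsum_comp_le_tsum_of_injective Subtype.val_injective _

theorem exists_tsum_zFn_mul_zPartial_rpow_le (d : ℕ) (s q : ℝ) (f : ℤ × (Fin d → ℤ) → ℝ)
    {ε : ℝ} (hε : 0 < ε) :
    ∃ C : ℝ≥0∞, C ≠ ∞ ∧ ∀ x, ∑' I, zFn d s q f I x * zPartial d s q f I x ^ (ε - 1)
      ≤ C * (∑' I, zFn d s q f I x) ^ ε := by
  rcases le_or_gt ε 1 with hε₁ | hε₁
  · have hε' : ENNReal.ofReal ε ≠ 0 := by simpa using hε
    refine ⟨(ENNReal.ofReal ε)⁻¹ * Fintype.card (Fin d → Prop),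
      ENNReal.mul_ne_top (ENNReal.inv_ne_top.mpr hε') (ENNReal.natCast_ne_top _), fun x => ?_⟩
    rw [mul_assoc, ← ENNReal.mul_le_iff_le_inv hε' ENNReal.ofReal_ne_top]
    exact ENNReal.ofReal_mul_tsum_mul_rpow_sub_one_le_card_mul hε hε₁ _ _
      (dyadicSide d x) Prod.fst fun I hI => tsum_indicator_dyadicSide_zFn_le_zPartial hI
  · refine ⟨1, ENNReal.one_ne_top, fun x => ?_⟩
    rw [one_mul]
    exact ENNReal.tsum_mul_rpow_sub_one_le_rpow_tsum hε₁.le _ _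
      fun I => zPartial_le_tsum_zFn d s q f I x

theorem sqMaxFn_rpow_mul {d : ℕ} {s q : ℝ} (hq : q ≠ 0) (f : ℤ × (Fin d → ℤ) → ℝ)
    (x : EuclideanSpace ℝ (Fin d)) (ε : ℝ) :
    sqMaxFn d s q f x ^ (q * ε) = (∑' I, zFn d s q f I x) ^ ε := by
  rw [sqMaxFn, ← ENNReal.rpow_mul]
  congr 1
  field_simp

theorem lintegral_rpow_rpow_le_of_le_mul_rpow {α : Type*} [MeasurableSpace α] {μ : Measure α}
    {F M : α → ℝ≥0∞} {C : ℝ≥0∞} (hC : C ≠ ∞) {p τ : ℝ} (hp : 0 < p) (hτ : τ ≠ 0)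
    (hF : ∀ x, F x ≤ C * M x ^ (τ / p)) :
    (∫⁻ x, F x ^ p ∂μ) ^ (1 / p) ≤ C * ((∫⁻ x, M x ^ τ ∂μ) ^ (1 / τ)) ^ (τ / p) := by
  have hFp x : F x ^ p ≤ C ^ p * M x ^ τ :=
    calc F x ^ p ≤ (C * M x ^ (τ / p)) ^ p := ENNReal.rpow_le_rpow (hF x) hp.le
      _ = C ^ p * M x ^ τ := by
        rw [ENNReal.mul_rpow_of_nonneg _ _ hp.le, ← ENNReal.rpow_mul, div_mul_cancel₀ τ hp.ne']
  calc (∫⁻ x, F x ^ p ∂μ) ^ (1 / p)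
      ≤ (∫⁻ x, C ^ p * M x ^ τ ∂μ) ^ (1 / p) :=
        ENNReal.rpow_le_rpow (lintegral_mono hFp) (by positivity)
    _ = C * ((∫⁻ x, M x ^ τ ∂μ) ^ (1 / τ)) ^ (τ / p) := by
        rw [lintegral_const_mul' _ _ (ENNReal.rpow_ne_top_of_nonneg hp.le hC),
          ENNReal.mul_rpow_of_nonneg _ _ (by positivity), ← ENNReal.rpow_mul, ← ENNReal.rpow_mul,
          mul_one_div_cancel hp.ne', ENNReal.rpow_one]
        congr 2
        field_simp

theorem devore_ron_pointwise_and_Lp_general (d : ℕ) (s p τ q : ℝ)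
    (hs : 0 < s) (hp : 1 ≤ p) (hτ : 1 / τ = 1 / p + s / d) (hq : 1 / q = 1 + s / d)
    (f : ℤ × (Fin d → ℤ) → ℝ) :
    (∀ ε : ℝ, 0 < ε → ∃ C : ℝ≥0∞, C ≠ ∞ ∧ ∀ x,
        (∑' I : ℤ × (Fin d → ℤ), zFn d s q f I x * (zPartial d s q f I x) ^ (ε - 1))
          ≤ C * (sqMaxFn d s q f x) ^ (q * ε)) ∧
    (∃ C : ℝ≥0∞, C ≠ ∞ ∧
        (∫⁻ x, (∑' I : ℤ × (Fin d → ℤ),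
            zFn d s q f I x * (zPartial d s q f I x) ^ (τ / (p * q) - 1)) ^ p) ^ (1 / p)
          ≤ C * ((∫⁻ x, (sqMaxFn d s q f x) ^ τ) ^ (1 / τ)) ^ (τ / p)) := by
  have hp₀ : 0 < p := by linarith
  have hq₀ : 0 < q := one_div_pos.mp (by rw [hq]; positivity)
  have hτ₀ : 0 < τ := one_div_pos.mp (by rw [hτ]; positivity)
  have pointwise (ε : ℝ) (hε : 0 < ε) : ∃ C : ℝ≥0∞, C ≠ ∞ ∧ ∀ x,
      (∑' I, zFn d s q f I x * (zPartial d s q f I x) ^ (ε - 1))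
        ≤ C * (sqMaxFn d s q f x) ^ (q * ε) := by
    simpa only [sqMaxFn_rpow_mul hq₀.ne'] using exists_tsum_zFn_mul_zPartial_rpow_le d s q f hε
  refine ⟨pointwise, ?_⟩
  obtain ⟨C, hC, hCx⟩ := pointwise (τ / (p * q)) (by positivity)
  refine ⟨C, hC, lintegral_rpow_rpow_le_of_le_mul_rpow hC hp₀ hτ₀.ne' fun x => ?_⟩
  convert hCx x using 3
  field_simp

/-- Pointwise DeVore–Ron bound `Σ_I z_I(x) Z_I(x)^{ε-1} ≤ C_ε M(x)^{qε}` and the resulting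
`L^p` bound `‖Σ_I z_I Z_I^{τ/(pq)-1}‖_{L^p} ≤ C ‖M‖_{L^τ}^{τ/p}`. -/
theorem devore_ron_pointwise_and_Lp (d : ℕ) (hd : 1 ≤ d) (s p τ q : ℝ)
    (hs : 0 < s) (hp : 1 ≤ p) (hτ : 1 / τ = 1 / p + s / d) (hq : 1 / q = 1 + s / d)
    (f : ℤ × (Fin d → ℤ) → ℝ)
    (hfin : (∫⁻ x, (sqMaxFn d s q f x) ^ τ) ≠ ∞) :
    (∀ ε : ℝ, 0 < ε → ∃ C : ℝ≥0∞, C ≠ ∞ ∧ ∀ x,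
        (∑' I : ℤ × (Fin d → ℤ), zFn d s q f I x * (zPartial d s q f I x) ^ (ε - 1))
          ≤ C * (sqMaxFn d s q f x) ^ (q * ε)) ∧
    (∃ C : ℝ≥0∞, C ≠ ∞ ∧
        (∫⁻ x, (∑' I : ℤ × (Fin d → ℤ),
            zFn d s q f I x * (zPartial d s q f I x) ^ (τ / (p * q) - 1)) ^ p) ^ (1 / p)
          ≤ C * ((∫⁻ x, (sqMaxFn d s q f x) ^ τ) ^ (1 / τ)) ^ (τ / p)) :=
  devore_ron_pointwise_and_Lp_general d s p τ q hs hp hτ hq f
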